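/- Let μ₁ and μ₂ be two distinct probability measures on a measurable space (Ω, F). For a probability measure μ, a bounded measurable X : Ω → ℝ, and α ∈ (0,1), write q_μ(X, α) = inf { x ∈ ℝ : μ({X > x}) < 1 − α }, and define q_D(X, α) = (1/2)·q_{μ₁}(X, α) + (1/2)·q_{μ₂}(X, α). Then: (a) for all bounded measurable X, Y : Ω → ℝ, all λ ∈ [0,1], and all α ∈ (0,1]: ∫₀^α q_D(λX + (1−λ)Y, β) dβ ≥ λ ∫₀^α q_D(X, β) dβ + (1−λ) ∫₀^α q_D(Y, β) dβ; (b) there is no probability measure μ on (Ω, F) such that q_μ(X, α) ≥ q_D(X, α) for all bounded measurable X and all α ∈ (0,1). -/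

import Mathlib

open MeasureTheory Filter Topology

noncomputable section

/-- Bounded measurable real-valued functions with respect to the σ-algebra `m`. -/
def BddMeas {Ω : Type*} (m : MeasurableSpace Ω) (X : Ω → ℝ) : Prop :=
  @Measurable Ω ℝ m _ X ∧ ∃ M : ℝ, ∀ ω, |X ω| ≤ M

/-- A capacity on a measurable space. -/
def IsCapacity {Ω : Type*} (m : MeasurableSpace Ω) (ν : Set Ω → ℝ) : Prop :=
  ν ∅ = 0 ∧ ν Set.univ = 1 ∧
    ∀ A B : Set Ω, @MeasurableSet Ω m A → @MeasurableSet Ω m B → A ⊆ B → ν A ≤ ν B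

/-- A continuous capacity: continuous along increasing and decreasing sequences. -/
def IsContinuousCapacity {Ω : Type*} (m : MeasurableSpace Ω) (ν : Set Ω → ℝ) : Prop :=
  IsCapacity m ν ∧
    (∀ A : ℕ → Set Ω, (∀ n, @MeasurableSet Ω m (A n)) → Monotone A →
      Filter.Tendsto (fun n => ν (A n)) Filter.atTop (nhds (ν (⋃ n, A n)))) ∧
    (∀ A : ℕ → Set Ω, (∀ n, @MeasurableSet Ω m (A n)) → Antitone A →
      Filter.Tendsto (fun n => ν (A n)) Filter.atTop (nhds (ν (⋂ n, A n))))

/-- Supermodularity of a capacity. -/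
def Supermodular {Ω : Type*} (m : MeasurableSpace Ω) (ν : Set Ω → ℝ) : Prop :=
  ∀ A B : Set Ω, @MeasurableSet Ω m A → @MeasurableSet Ω m B →
    ν A + ν B ≤ ν (A ∪ B) + ν (A ∩ B)

/-- A distribution: a compactly supported Borel probability measure on ℝ. -/
def IsDistribution (Q : Measure ℝ) : Prop :=
  IsProbabilityMeasure Q ∧ ∃ a b : ℝ, Q (Set.Icc a b) = 1

/-- `FSDle P Q` means `Q ≥_fsd P` (first-order stochastic dominance). -/
def FSDle (P Q : Measure ℝ) : Prop := ∀ x : ℝ, P (Set.Ioi x) ≤ Q (Set.Ioi x)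

/-- Weak convergence of a sequence of Borel measures on ℝ. -/
def WeakConv (Qn : ℕ → Measure ℝ) (Q : Measure ℝ) : Prop :=
  ∀ f : BoundedContinuousFunction ℝ ℝ,
    Filter.Tendsto (fun n => ∫ x, f x ∂(Qn n)) Filter.atTop (nhds (∫ x, f x ∂Q))

/-- A statistic: strictly fsd-monotone and compactly continuous functional on distributions. -/
def IsStatistic (γ : Measure ℝ → ℝ) : Prop :=
  (∀ Q P : Measure ℝ, IsDistribution Q → IsDistribution P → FSDle P Q → γ P ≤ γ Q) ∧
  (∀ Q P : Measure ℝ, IsDistribution Q → IsDistribution P → FSDle P Q → Q ≠ P → γ P < γ Q) ∧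
  (∀ (Qn : ℕ → Measure ℝ) (Q : Measure ℝ), (∀ n, IsDistribution (Qn n)) → IsDistribution Q →
    (∃ a b : ℝ, ∀ n, Qn n (Set.Icc a b) = 1) → WeakConv Qn Q →
    Filter.Tendsto (fun n => γ (Qn n)) Filter.atTop (nhds (γ Q)))

/-- A certainty-equivalent statistic. -/
def IsCEStatistic (γ : Measure ℝ → ℝ) : Prop :=
  IsStatistic γ ∧ ∀ c : ℝ, γ (MeasureTheory.Measure.dirac c) = c

/-- `D` is the Choquet act-to-distribution mapping associated with the capacity `ν`. -/
def IsChoquetATD {Ω : Type*} (m : MeasurableSpace Ω) (ν : Set Ω → ℝ)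
    (D : (Ω → ℝ) → Measure ℝ) : Prop :=
  ∀ X : Ω → ℝ, BddMeas m X →
    IsDistribution (D X) ∧ ∀ x : ℝ, (D X (Set.Ioi x)).toReal = ν {ω | x < X ω}

/-- The ν-quantile of `X` at level `α`. -/
def capQuantile {Ω : Type*} (ν : Set Ω → ℝ) (X : Ω → ℝ) (α : ℝ) : ℝ :=
  sInf {x : ℝ | ν {ω | x < X ω} < 1 - α}

/-- The quantile function of a distribution. -/
def distQuantile (Q : Measure ℝ) (α : ℝ) : ℝ :=
  sInf {x : ℝ | (Q (Set.Ioi x)).toReal < 1 - α}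

/-- Comonotonic pairs of functions. -/
def Comonotonic {Ω : Type*} (X Y : Ω → ℝ) : Prop :=
  ∀ s s' : Ω, 0 ≤ (X s - X s') * (Y s - Y s')

/-- Real-valued indicator function of a set. -/
def ind {Ω : Type*} (A : Set Ω) : Ω → ℝ := A.indicator fun _ => 1

/-- Atomlessness of `P` in the sense of the paper. -/
def AtomlessOn {Ω : Type*} (G : MeasurableSpace Ω) (P : @Measure Ω G) : Prop :=
  ∀ A : Set Ω, @MeasurableSet Ω G A → ∀ r : ENNReal, r ≤ P A →
    ∃ B : Set Ω, @MeasurableSet Ω G B ∧ B ⊆ A ∧ P B = r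

/-- A capacity is risk conforming if it coincides with `P` on `G`. -/
def RiskConforming {Ω : Type*} (G : MeasurableSpace Ω) (P : @Measure Ω G)
    (ν : Set Ω → ℝ) : Prop :=
  ∀ A : Set Ω, @MeasurableSet Ω G A → ν A = (P A).toReal

/-- A preference relation: a total preorder on the bounded `m`-measurable functions. -/
def TotalPreorderOn {Ω : Type*} (m : MeasurableSpace Ω)
    (pref : (Ω → ℝ) → (Ω → ℝ) → Prop) : Prop :=
  (∀ X Y, BddMeas m X → BddMeas m Y → pref X Y ∨ pref Y X) ∧
  (∀ X Y Z, BddMeas m X → BddMeas m Y → BddMeas m Z → pref X Y → pref Y Z → pref X Z)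

/-- Axiom (M): monotonicity. -/
def AxiomM {Ω : Type*} (m : MeasurableSpace Ω) (pref : (Ω → ℝ) → (Ω → ℝ) → Prop) : Prop :=
  ∀ X Y, BddMeas m X → BddMeas m Y → (∀ ω, Y ω ≤ X ω) → pref X Y

/-- Axiom (RC): risk conformity. -/
def AxiomRC {Ω : Type*} (G : MeasurableSpace Ω) (P : @Measure Ω G)
    (pref : (Ω → ℝ) → (Ω → ℝ) → Prop) : Prop :=
  ∀ X Y, BddMeas G X → BddMeas G Y →
    (∀ x : ℝ, P {ω | x < X ω} = P {ω | x < Y ω}) → pref X Y ∧ pref Y X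

/-- Axiom (SRM): strict risk monotonicity. -/
def AxiomSRM {Ω : Type*} (G : MeasurableSpace Ω) (P : @Measure Ω G)
    (pref : (Ω → ℝ) → (Ω → ℝ) → Prop) : Prop :=
  ∀ X Y, BddMeas G X → BddMeas G Y →
    P {ω | Y ω ≤ X ω} = 1 → 0 < P {ω | Y ω < X ω} → pref X Y ∧ ¬ pref Y X

/-- Axiom (C): continuity (B-closedness of upper and lower contour sets). -/
def AxiomC {Ω : Type*} (m : MeasurableSpace Ω) (pref : (Ω → ℝ) → (Ω → ℝ) → Prop) : Prop :=
  ∀ X, BddMeas m X → ∀ (Yn : ℕ → Ω → ℝ) (Y : Ω → ℝ),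
    (∀ n, BddMeas m (Yn n)) → BddMeas m Y →
    (∃ M : ℝ, ∀ n ω, |Yn n ω| ≤ M) →
    (∀ ω, Filter.Tendsto (fun n => Yn n ω) Filter.atTop (nhds (Y ω))) →
    ((∀ n, pref X (Yn n)) → pref X Y) ∧ ((∀ n, pref (Yn n) X) → pref Y X)

/-- Axiom (CD): cumulative dominance. -/
def AxiomCD {Ω : Type*} (m : MeasurableSpace Ω) (pref : (Ω → ℝ) → (Ω → ℝ) → Prop) : Prop :=
  ∀ X Y, BddMeas m X → BddMeas m Y →
    (∀ x : ℝ, pref (ind {ω | x < X ω}) (ind {ω | x < Y ω}) ∧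
       pref (ind {ω | x < Y ω}) (ind {ω | x < X ω})) →
    pref X Y ∧ pref Y X

/-- `SSDle P Q` means `Q ≥_ssd P` (second-order stochastic dominance). -/
def SSDle (P Q : Measure ℝ) : Prop :=
  ∀ f : ℝ → ℝ, Monotone f → ConcaveOn ℝ Set.univ f → ∫ x, f x ∂P ≤ ∫ x, f x ∂Q

/-- Comonotonic quasiconcavity of a statistic. -/
def ComonotonicQuasiconcave (γ : Measure ℝ → ℝ) : Prop :=
  ∀ Q P R : Measure ℝ, IsDistribution Q → IsDistribution P → IsDistribution R →
    ∀ l : ℝ, 0 ≤ l → l ≤ 1 →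
    (∀ β : ℝ, 0 < β → β < 1 →
      distQuantile R β = l * distQuantile Q β + (1 - l) * distQuantile P β) →
    min (γ Q) (γ P) ≤ γ R

/-- Exactness of a capacity. -/
def ExactCapacity {Ω : Type*} (m : MeasurableSpace Ω) (ν : Set Ω → ℝ) : Prop :=
  ∀ A : Set Ω, @MeasurableSet Ω m A →
    ∃ μ : @Measure Ω m, @IsProbabilityMeasure Ω m μ ∧
      (∀ B : Set Ω, @MeasurableSet Ω m B → ν B ≤ (μ B).toReal) ∧ (μ A).toReal = ν A


/-!
For a single probability measure `μ`, the integrated quantile `∫₀^α q_μ(X, β) dβ` is the value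
of the Rockafellar–Uryasev problem `max_t (α t - E_μ[(t - X)⁺])`: by the quantile transform,
`E_μ[(t - X)⁺] = ∫₀¹ (t - q_μ(X, β))⁺ dβ`, and the maximum is attained at `t = q_μ(X, α)`.
A supremum of functions that are jointly concave in `(t, X)` is concave in `X`, so each
integrated quantile is concave, and so is their average.

For (b), the quantile of an indicator `1_A` at level `α` is `0` or `1` according to whether
`μ(A) < 1 - α`. Dominating the average of the two quantiles at all indicators forces
`μ₁(A) ≤ μ(A)` and `μ₂(A) ≤ μ(A)` for every `A`, hence `μ₁ = μ = μ₂`.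
-/

open Set

section BddMeas

variable {Ω : Type*} {m : MeasurableSpace Ω} {X Y : Ω → ℝ}

theorem BddMeas.add (hX : BddMeas m X) (hY : BddMeas m Y) : BddMeas m (fun ω => X ω + Y ω) := by
  obtain ⟨hXm, M, hM⟩ := hX
  obtain ⟨hYm, N, hN⟩ := hY
  exact ⟨hXm.add hYm, M + N, fun ω => (abs_add_le _ _).trans (add_le_add (hM ω) (hN ω))⟩

theorem BddMeas.const_mul (hX : BddMeas m X) (c : ℝ) : BddMeas m (fun ω => c * X ω) := by
  obtain ⟨hXm, M, hM⟩ := hX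
  refine ⟨hXm.const_mul c, |c| * M, fun ω => ?_⟩
  rw [abs_mul]
  exact mul_le_mul_of_nonneg_left (hM ω) (abs_nonneg c)

theorem bddMeas_ind {A : Set Ω} (hA : MeasurableSet A) : BddMeas m (ind A) :=
  ⟨measurable_const.indicator hA, 1, fun ω => by
    unfold ind; by_cases h : ω ∈ A <;> simp [h]⟩

theorem BddMeas.integrable {μ : Measure Ω} [IsFiniteMeasure μ] (hX : BddMeas m X) :
    Integrable X μ := by
  obtain ⟨hXm, M, hM⟩ := hX
  exact Integrable.of_bound hXm.aestronglyMeasurable M (ae_of_all _ hM)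

theorem BddMeas.integrable_max_sub {μ : Measure Ω} [IsFiniteMeasure μ] (hX : BddMeas m X)
    (t : ℝ) : Integrable (fun ω => max (t - X ω) 0) μ :=
  ((integrable_const t).sub hX.integrable).pos_part

end BddMeas

section Quantile

variable {Ω : Type*} [m : MeasurableSpace Ω] {μ : Measure Ω} [IsProbabilityMeasure μ]
  {X Y : Ω → ℝ} {β M : ℝ}

theorem capQuantile_lt_iff (hX : BddMeas m X) (hβ0 : 0 < β) (hβ1 : β < 1) (y : ℝ) :
    capQuantile (fun A => (μ A).toReal) X β < y ↔ β < μ.real {ω | X ω < y} := by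
  obtain ⟨hXm, M, hM⟩ := hX
  have hbdd : BddBelow {x : ℝ | (μ {ω | x < X ω}).toReal < 1 - β} := by
    refine ⟨-M, fun x hx => not_lt.1 fun hxM => ?_⟩
    have : {ω | x < X ω} = univ :=
      eq_univ_of_forall fun ω => hxM.trans_le (neg_le_of_abs_le (hM ω))
    simp only [mem_ofPred_eq, this, measure_univ, ENNReal.toReal_one] at hx
    linarith
  have hne : {x : ℝ | (μ {ω | x < X ω}).toReal < 1 - β}.Nonempty := by
    have : {ω | M < X ω} = ∅ :=
      eq_empty_of_forall_notMem fun ω h => (le_of_abs_le (hM ω)).not_gt h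
    exact ⟨M, by simp only [mem_ofPred_eq, this, measure_empty, ENNReal.toReal_zero]; linarith⟩
  have hcompl : ∀ x, (μ {ω | x < X ω}).toReal = 1 - μ.real (X ⁻¹' Iic x) := fun x => by
    rw [← probReal_compl_eq_one_sub (hXm measurableSet_Iic), Measure.real]
    congr 2
    ext ω
    simp
  rw [capQuantile, csInf_lt_iff hbdd hne]
  constructor
  · rintro ⟨x, hx, hxy⟩
    have : μ.real (X ⁻¹' Iic x) ≤ μ.real {ω | X ω < y} :=
      measureReal_mono fun ω (hω : X ω ≤ x) => hω.trans_lt hxy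
    rw [mem_ofPred_eq, hcompl] at hx
    linarith
  · intro h
    -- continuity from below along `{X ≤ u n} ↑ {X < y}`
    obtain ⟨u, hu_mono, hu, hu_lim⟩ := exists_seq_strictMono_tendsto' (sub_one_lt y)
    have hunion : ⋃ n, X ⁻¹' Iic (u n) = X ⁻¹' Iio y := by
      rw [← preimage_iUnion, iUnion_Iic_eq_Iio_of_lt_of_tendsto (fun n => (hu n).2) hu_lim]
    have hlim := tendsto_measure_iUnion_atTop (μ := μ)
      (fun i j hij => preimage_mono (Iic_subset_Iic.2 (hu_mono.monotone hij)) :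
        Monotone fun n => X ⁻¹' Iic (u n))
    rw [hunion] at hlim
    have hβlt : ENNReal.ofReal β < μ (X ⁻¹' Iio y) :=
      (ENNReal.ofReal_lt_iff_lt_toReal hβ0.le (measure_ne_top _ _)).2 h
    obtain ⟨n, hn⟩ := (hlim.eventually (lt_mem_nhds hβlt)).exists
    have := (ENNReal.ofReal_lt_iff_lt_toReal hβ0.le (measure_ne_top _ _)).1 hn
    refine ⟨u n, ?_, (hu n).2⟩
    rw [mem_ofPred_eq, hcompl]
    exact sub_lt_sub_left this 1

theorem capQuantile_monotoneOn (hX : BddMeas m X) :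
    MonotoneOn (capQuantile (fun A => (μ A).toReal) X) (Ioo 0 1) := by
  intro β hβ β' hβ' hle
  by_contra! h
  have := (capQuantile_lt_iff hX hβ'.1 hβ'.2 _).1 h
  exact lt_irrefl _ ((capQuantile_lt_iff hX hβ.1 hβ.2 _).2 (hle.trans_lt this))

theorem capQuantile_le (hX : BddMeas m X) (hβ0 : 0 < β) (hβ1 : β < 1) (hXM : ∀ ω, X ω ≤ M) :
    capQuantile (fun A => (μ A).toReal) X β ≤ M := by
  refine le_of_forall_gt fun y hy => (capQuantile_lt_iff hX hβ0 hβ1 y).2 ?_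
  have : {ω | X ω < y} = univ := eq_univ_of_forall fun ω => (hXM ω).trans_lt hy
  simpa [this] using hβ1

theorem le_capQuantile (hX : BddMeas m X) (hβ0 : 0 < β) (hβ1 : β < 1) (hMX : ∀ ω, M ≤ X ω) :
    M ≤ capQuantile (fun A => (μ A).toReal) X β := by
  refine not_lt.1 fun h => ?_
  have hlt := (capQuantile_lt_iff hX hβ0 hβ1 M).1 h
  have : {ω | X ω < M} = ∅ := eq_empty_of_forall_notMem fun ω hω => (hMX ω).not_gt hω
  simp [this] at hlt
  linarith

theorem integrableOn_capQuantile (hX : BddMeas m X) :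
    IntegrableOn (capQuantile (fun A => (μ A).toReal) X) (Ioo 0 1) := by
  obtain ⟨M, hM⟩ := hX.2
  refine Integrable.of_bound
    (aemeasurable_restrict_of_monotoneOn measurableSet_Ioo
      (capQuantile_monotoneOn hX)).aestronglyMeasurable M
    ((ae_restrict_iff' measurableSet_Ioo).2 (ae_of_all _ fun β hβ => ?_))
  rw [Real.norm_eq_abs, abs_le]
  exact ⟨le_capQuantile hX hβ.1 hβ.2 fun ω => neg_le_of_abs_le (hM ω),
    capQuantile_le hX hβ.1 hβ.2 fun ω => le_of_abs_le (hM ω)⟩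

theorem map_capQuantile_restrict_Ioo (hX : BddMeas m X) :
    (volume.restrict (Ioo 0 1)).map (capQuantile (fun A => (μ A).toReal) X) = μ.map X := by
  have hq : AEMeasurable (capQuantile (fun A => (μ A).toReal) X) (volume.restrict (Ioo 0 1)) :=
    aemeasurable_restrict_of_monotoneOn measurableSet_Ioo (capQuantile_monotoneOn hX)
  refine ext_of_generate_finite _ (BorelSpace.measurable_eq.trans (borel_eq_generateFrom_Iio ℝ))
    isPiSystem_Iio ?_ ?_
  · rintro _ ⟨y, rfl⟩
    have hlevel : capQuantile (fun A => (μ A).toReal) X ⁻¹' Iio y ∩ Ioo 0 1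
        = Ioo 0 (μ.real {ω | X ω < y}) := by
      ext β
      simp only [mem_inter_iff, mem_preimage, mem_Iio, mem_Ioo]
      constructor
      · rintro ⟨hqy, hβ0, hβ1⟩
        exact ⟨hβ0, (capQuantile_lt_iff hX hβ0 hβ1 y).1 hqy⟩
      · rintro ⟨hβ0, hβy⟩
        have hβ1 : β < 1 := hβy.trans_le measureReal_le_one
        exact ⟨(capQuantile_lt_iff hX hβ0 hβ1 y).2 hβy, hβ0, hβ1⟩
    rw [Measure.map_apply_of_aemeasurable hq measurableSet_Iio,
      Measure.restrict_apply' measurableSet_Ioo, hlevel, Real.volume_Ioo,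
      Measure.map_apply hX.1 measurableSet_Iio, sub_zero, Measure.real, ENNReal.ofReal_toReal
      (measure_ne_top _ _)]
    rfl
  · rw [Measure.map_apply_of_aemeasurable hq MeasurableSet.univ,
      Measure.map_apply hX.1 MeasurableSet.univ]
    simp

theorem integral_comp_eq_setIntegral_capQuantile (hX : BddMeas m X) {g : ℝ → ℝ}
    (hg : Measurable g) :
    ∫ ω, g (X ω) ∂μ = ∫ β in Ioo 0 1, g (capQuantile (fun A => (μ A).toReal) X β) := by
  rw [← integral_map hX.1.aemeasurable hg.aestronglyMeasurable, ← map_capQuantile_restrict_Ioo hX,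
    integral_map (aemeasurable_restrict_of_monotoneOn measurableSet_Ioo
      (capQuantile_monotoneOn hX)) hg.aestronglyMeasurable]

theorem isGreatest_setIntegral_capQuantile (hX : BddMeas m X) {α : ℝ} (hα0 : 0 < α)
    (hα1 : α ≤ 1) :
    IsGreatest (range fun t => α * t - ∫ ω, max (t - X ω) 0 ∂μ)
      (∫ β in Ioo 0 α, capQuantile (fun A => (μ A).toReal) X β) := by
  set q := capQuantile (fun A => (μ A).toReal) X
  have hq : IntegrableOn q (Ioo 0 1) := integrableOn_capQuantile hX
  have hsub : Ioo 0 α ⊆ Ioo (0 : ℝ) 1 := Ioo_subset_Ioo_right hα1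
  have hposPart : ∀ t, ∫ ω, max (t - X ω) 0 ∂μ = ∫ β in Ioo 0 1, max (t - q β) 0 := fun t =>
    integral_comp_eq_setIntegral_capQuantile hX (g := fun x => max (t - x) 0) (by fun_prop)
  have hlinear : ∀ t, ∫ β in Ioo 0 α, (t - q β) = α * t - ∫ β in Ioo 0 α, q β := fun t => by
    rw [integral_sub (integrable_const t) (hq.mono_set hsub), setIntegral_const,
      measureReal_def, Real.volume_Ioo, sub_zero, ENNReal.toReal_ofReal hα0.le, smul_eq_mul]
  constructor
  · obtain ⟨t, hbelow, habove⟩ :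
        ∃ t, (∀ β ∈ Ioo 0 α, q β ≤ t) ∧ ∀ β ∈ Ioo 0 1 \ Ioo 0 α, t ≤ q β := by
      rcases hα1.lt_or_eq with hα1 | rfl
      · refine ⟨q α, fun β hβ => capQuantile_monotoneOn hX (hsub hβ) ⟨hα0, hα1⟩ hβ.2.le,
          fun β hβ => capQuantile_monotoneOn hX ⟨hα0, hα1⟩ hβ.1 ?_⟩
        exact not_lt.1 fun h => hβ.2 ⟨hβ.1.1, h⟩
      · obtain ⟨M, hM⟩ := hX.2
        exact ⟨M, fun β hβ => capQuantile_le hX hβ.1 hβ.2 fun ω => le_of_abs_le (hM ω),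
          by simp⟩
    refine ⟨t, ?_⟩
    dsimp only
    rw [hposPart, setIntegral_eq_of_subset_of_forall_sdiff_eq_zero measurableSet_Ioo hsub
      fun β hβ => max_eq_right (sub_nonpos.2 (habove β hβ)),
      setIntegral_congr_fun measurableSet_Ioo fun β hβ => max_eq_left (sub_nonneg.2 (hbelow β hβ)),
      hlinear]
    ring
  · rintro _ ⟨t, rfl⟩
    have hint : IntegrableOn (fun β => max (t - q β) 0) (Ioo 0 1) :=
      ((integrable_const t).sub hq).pos_part
    have : ∫ β in Ioo 0 α, (t - q β) ≤ ∫ β in Ioo 0 1, max (t - q β) 0 :=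
      calc ∫ β in Ioo 0 α, (t - q β)
          ≤ ∫ β in Ioo 0 α, max (t - q β) 0 :=
            setIntegral_mono_on ((integrable_const t).sub (hq.mono_set hsub))
              (hint.mono_set hsub) measurableSet_Ioo fun β _ => le_max_left _ _
        _ ≤ ∫ β in Ioo 0 1, max (t - q β) 0 :=
            setIntegral_mono_set hint (ae_of_all _ fun β => le_max_right _ _) hsub.eventuallyLE
    dsimp only
    linarith [hlinear t, hposPart t]

theorem intervalIntegrable_capQuantile (hX : BddMeas m X) {α : ℝ} (hα0 : 0 ≤ α) (hα1 : α ≤ 1) :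
    IntervalIntegrable (capQuantile (fun A => (μ A).toReal) X) volume 0 α := by
  rw [intervalIntegrable_iff_integrableOn_Ioo_of_le hα0]
  exact (integrableOn_capQuantile hX).mono_set (Ioo_subset_Ioo_right hα1)

theorem intervalIntegral_capQuantile_concave (hX : BddMeas m X) (hY : BddMeas m Y) {l α : ℝ}
    (hl0 : 0 ≤ l) (hl1 : l ≤ 1) (hα0 : 0 < α) (hα1 : α ≤ 1) :
    l * (∫ β in 0..α, capQuantile (fun A => (μ A).toReal) X β) +
        (1 - l) * (∫ β in 0..α, capQuantile (fun A => (μ A).toReal) Y β) ≤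
      ∫ β in 0..α, capQuantile (fun A => (μ A).toReal) (fun ω => l * X ω + (1 - l) * Y ω) β := by
  simp only [intervalIntegral.integral_of_le hα0.le, integral_Ioc_eq_integral_Ioo]
  obtain ⟨⟨tX, htX⟩, -⟩ := isGreatest_setIntegral_capQuantile (μ := μ) hX hα0 hα1
  obtain ⟨⟨tY, htY⟩, -⟩ := isGreatest_setIntegral_capQuantile (μ := μ) hY hα0 hα1
  have hZ := isGreatest_setIntegral_capQuantile (μ := μ)
    ((hX.const_mul l).add (hY.const_mul (1 - l))) hα0 hα1
  have hvalue := hZ.2 ⟨l * tX + (1 - l) * tY, rfl⟩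
  dsimp only at htX htY hvalue
  -- `x ↦ max x 0` is convex, so the shortfall of the mixture is at most the mixed shortfalls
  have hconvex : ∫ ω, max (l * tX + (1 - l) * tY - (l * X ω + (1 - l) * Y ω)) 0 ∂μ ≤
      l * ∫ ω, max (tX - X ω) 0 ∂μ + (1 - l) * ∫ ω, max (tY - Y ω) 0 ∂μ := by
    have hXint := hX.integrable_max_sub (μ := μ) tX
    have hYint := hY.integrable_max_sub (μ := μ) tY
    rw [← integral_const_mul, ← integral_const_mul, ← integral_add (hXint.const_mul l)
      (hYint.const_mul (1 - l))]
    refine integral_mono (((hX.const_mul l).add (hY.const_mul (1 - l))).integrable_max_sub _)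
      ((hXint.const_mul l).add (hYint.const_mul (1 - l))) fun ω => ?_
    refine max_le ?_ (by positivity)
    nlinarith [le_max_left (tX - X ω) 0, le_max_left (tY - Y ω) 0]
  rw [← htX, ← htY]
  linear_combination hvalue + hconvex

end Quantile

section Indicator

variable {Ω : Type*}

theorem capQuantile_ind {ν : Set Ω → ℝ} (h_empty : ν ∅ = 0) (h_univ : ν univ = 1) (A : Set Ω)
    {α : ℝ} (hα0 : 0 < α) (hα1 : α < 1) :
    capQuantile ν (ind A) α = if ν A < 1 - α then 0 else 1 := by
  have hlevel : ∀ x, {ω | x < ind A ω} = if x < 0 then univ else if x < 1 then A else ∅ := by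
    intro x
    ext ω
    unfold ind
    by_cases hω : ω ∈ A <;> split_ifs <;> simp [hω] <;> linarith
  have hS : {x | ν {ω | x < ind A ω} < 1 - α} = Ici (if ν A < 1 - α then 0 else 1) := by
    ext x
    simp only [mem_ofPred_eq, mem_Ici, hlevel]
    rcases lt_or_ge x 0 with hx0 | hx0
    · simp only [if_pos hx0, h_univ]
      split_ifs <;> constructor <;> intro <;> linarith
    rcases lt_or_ge x 1 with hx1 | hx1
    · simp only [if_neg hx0.not_gt, if_pos hx1]
      split_ifs with hA
      · exact iff_of_true hA hx0
      · exact iff_of_false hA hx1.not_ge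
    · simp only [if_neg hx0.not_gt, if_neg hx1.not_gt, h_empty]
      split_ifs <;> constructor <;> intro <;> linarith
  rw [capQuantile, hS, csInf_Ici]

theorem le_of_average_capQuantile_le [m : MeasurableSpace Ω] {μ₁ μ₂ μ : Measure Ω}
    [IsProbabilityMeasure μ₁] [IsProbabilityMeasure μ₂] [IsProbabilityMeasure μ]
    (h : ∀ X : Ω → ℝ, BddMeas m X → ∀ α : ℝ, 0 < α → α < 1 →
      (1 / 2) * capQuantile (fun A => (μ₁ A).toReal) X α +
          (1 / 2) * capQuantile (fun A => (μ₂ A).toReal) X α ≤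
        capQuantile (fun A => (μ A).toReal) X α) :
    μ₁ ≤ μ := by
  refine Measure.le_iff.2 fun A hA => ?_
  rw [← ENNReal.toReal_le_toReal (measure_ne_top _ _) (measure_ne_top _ _)]
  by_contra! hlt
  have h0 : 0 ≤ (μ A).toReal := ENNReal.toReal_nonneg
  have h1 : (μ₁ A).toReal ≤ 1 := measureReal_le_one
  -- at level `1 - s`, the quantile of `1_A` is `0` under `μ` but `1` under `μ₁`
  obtain ⟨s, hμs, hsμ₁⟩ := exists_between hlt
  have hs := h (ind A) (bddMeas_ind hA) (1 - s) (by linarith) (by linarith)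
  rw [capQuantile_ind (by simp) (by simp) A (by linarith) (by linarith),
    capQuantile_ind (by simp) (by simp) A (by linarith) (by linarith),
    capQuantile_ind (by simp) (by simp) A (by linarith) (by linarith), sub_sub_cancel] at hs
  split_ifs at hs <;> linarith

end Indicator

/-- the quantile-average act-to-distribution mapping of two
distinct probability measures is concave but not ambiguity averse
(Example `ex:counter2`). -/
theorem stmt19 {Ω : Type*} [F : MeasurableSpace Ω] (μ₁ μ₂ : Measure Ω)
    (h₁ : IsProbabilityMeasure μ₁) (h₂ : IsProbabilityMeasure μ₂)
    (hne : ∃ A : Set Ω, MeasurableSet A ∧ μ₁ A ≠ μ₂ A) :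
    (∀ X Y : Ω → ℝ, BddMeas F X → BddMeas F Y → ∀ l : ℝ, 0 ≤ l → l ≤ 1 →
      ∀ α : ℝ, 0 < α → α ≤ 1 →
        l * (∫ β in (0:ℝ)..α,
              ((1:ℝ)/2) * capQuantile (fun A => (μ₁ A).toReal) X β +
                ((1:ℝ)/2) * capQuantile (fun A => (μ₂ A).toReal) X β) +
          (1 - l) * (∫ β in (0:ℝ)..α,
              ((1:ℝ)/2) * capQuantile (fun A => (μ₁ A).toReal) Y β +
                ((1:ℝ)/2) * capQuantile (fun A => (μ₂ A).toReal) Y β) ≤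
        ∫ β in (0:ℝ)..α,
          ((1:ℝ)/2) * capQuantile (fun A => (μ₁ A).toReal)
              (fun ω => l * X ω + (1 - l) * Y ω) β +
            ((1:ℝ)/2) * capQuantile (fun A => (μ₂ A).toReal)
              (fun ω => l * X ω + (1 - l) * Y ω) β) ∧
    ¬ (∃ μ : Measure Ω, IsProbabilityMeasure μ ∧
        ∀ X : Ω → ℝ, BddMeas F X → ∀ α : ℝ, 0 < α → α < 1 →
          ((1:ℝ)/2) * capQuantile (fun A => (μ₁ A).toReal) X α +
              ((1:ℝ)/2) * capQuantile (fun A => (μ₂ A).toReal) X α ≤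
            capQuantile (fun A => (μ A).toReal) X α) := by
  refine ⟨fun X Y hX hY l hl0 hl1 α hα0 hα1 => ?_, ?_⟩
  · have hsplit : ∀ W : Ω → ℝ, BddMeas F W →
        ∫ β in (0:ℝ)..α, ((1:ℝ)/2) * capQuantile (fun A => (μ₁ A).toReal) W β +
            ((1:ℝ)/2) * capQuantile (fun A => (μ₂ A).toReal) W β =
          (1/2) * (∫ β in (0:ℝ)..α, capQuantile (fun A => (μ₁ A).toReal) W β) +
            (1/2) * ∫ β in (0:ℝ)..α, capQuantile (fun A => (μ₂ A).toReal) W β := fun W hW => by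
      rw [intervalIntegral.integral_add
        ((intervalIntegrable_capQuantile hW hα0.le hα1).const_mul _)
        ((intervalIntegrable_capQuantile hW hα0.le hα1).const_mul _),
        intervalIntegral.integral_const_mul, intervalIntegral.integral_const_mul]
    rw [hsplit X hX, hsplit Y hY, hsplit _ ((hX.const_mul l).add (hY.const_mul (1 - l)))]
    linear_combination (1/2) * intervalIntegral_capQuantile_concave (μ := μ₁) hX hY hl0 hl1 hα0 hα1
      + (1/2) * intervalIntegral_capQuantile_concave (μ := μ₂) hX hY hl0 hl1 hα0 hα1
  · rintro ⟨μ, hμ, hdom⟩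
    obtain ⟨A, -, hA⟩ := hne
    have e₁ : μ₁ = μ := Measure.eq_of_le_of_isProbabilityMeasure
      (le_of_average_capQuantile_le hdom)
    have e₂ : μ₂ = μ := Measure.eq_of_le_of_isProbabilityMeasure
      (le_of_average_capQuantile_le fun X hX α hα0 hα1 =>
        (add_comm _ _).le.trans (hdom X hX α hα0 hα1))
    exact hA (by rw [e₁, e₂])
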